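/- arXiv:q-alg/9612027 — 2 statements merged into one kernel-verified Lean document; each statement's English description precedes it below -/
import Mathlib

section
/- Let n ∈ ℕ. For every ℂ-linear endomorphism φ of 𝒯ₙ there exists a unique family of polynomials (f_{ij})_{0 ≤ i+j ≤ n} in R such that for every P ∈ 𝒯ₙ one has Σ_{0 ≤ i+j ≤ n} f_{ij} · (D_x^i (D_y^j P)) = φ(P) (an equality in R, where 𝒯ₙ is regarded as a subspace of R). -/
noncomputable section

open MvPolynomial

/-- The bivariate polynomial ring `R = ℂ[x,y]`. -/
abbrev R2 : Type := MvPolynomial (Fin 2) ℂ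

/-- The variable `x`. -/
def Xv : R2 := X 0

/-- The variable `y`. -/
def Yv : R2 := X 1

/-- The partial derivative `∂_x` as a `ℂ`-linear endomorphism. -/
def Dx : Module.End ℂ R2 := (pderiv (0 : Fin 2)).toLinearMap

/-- The partial derivative `∂_y` as a `ℂ`-linear endomorphism. -/
def Dy : Module.End ℂ R2 := (pderiv (1 : Fin 2)).toLinearMap

/-- Multiplication by `f` as an endomorphism. -/
def Mf (f : R2) : Module.End ℂ R2 := LinearMap.mulLeft ℂ f

/-- All compositions (products) of at most `k` elements of `S`; the empty
composition is the identity. -/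
def prodsLE (k : ℕ) (S : Set (Module.End ℂ R2)) : Set (Module.End ℂ R2) :=
  {T | ∃ l : List (Module.End ℂ R2), l.length ≤ k ∧ (∀ a ∈ l, a ∈ S) ∧ l.prod = T}

/-- The rectangular module `ℛ_{n,m}`. -/
def Rmod (n m : ℕ) : Submodule ℂ R2 :=
  Submodule.span ℂ {P : R2 | ∃ i j : ℕ, i ≤ n ∧ j ≤ m ∧ P = Xv ^ i * Yv ^ j}

/-- The triangular module `𝒯ₙ`. -/
def Tmod (n : ℕ) : Submodule ℂ R2 :=
  Submodule.span ℂ {P : R2 | ∃ i j : ℕ, i + j ≤ n ∧ P = Xv ^ i * Yv ^ j}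

/-- The staircase module `𝒮^r_{p,q}`. -/
def Smod (r p q : ℕ) : Submodule ℂ R2 :=
  Submodule.span ℂ {P : R2 | ∃ i j : ℕ, i + r * j ≤ p ∧ j ≤ q ∧ P = Xv ^ i * Yv ^ j}

/-- An endomorphism has nonpositive `y`-degree if it maps each monomial `xᵃyᵇ`
into the span of the monomials `x^c y^e` with `e ≤ b`. -/
def NonposY (T : Module.End ℂ R2) : Prop :=
  ∀ a b : ℕ, T (Xv ^ a * Yv ^ b) ∈
    Submodule.span ℂ {P : R2 | ∃ c e : ℕ, e ≤ b ∧ P = Xv ^ c * Yv ^ e}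

/-- The index set `{(i,j) : i + j ≤ n}`. -/
def tIdx (n : ℕ) : Finset (ℕ × ℕ) :=
  (Finset.range (n + 1) ×ˢ Finset.range (n + 1)).filter (fun ij => ij.1 + ij.2 ≤ n)


lemma end_pow_succ (T : Module.End ℂ R2) (i : ℕ) (p : R2) :
    (T ^ (i+1)) p = (T ^ i) (T p) := by
  rw [pow_succ]; rfl

lemma dx_Xpow (a : ℕ) : Dx (Xv ^ a) = (a : ℂ) • Xv ^ (a-1) := by
  cases a with
  | zero => simp [Dx, Xv]
  | succ a' => simp [Dx, Xv, pderiv_pow, pderiv_X_self, Algebra.smul_def]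

lemma dy_Ypow (b : ℕ) : Dy (Yv ^ b) = (b : ℂ) • Yv ^ (b-1) := by
  cases b with
  | zero => simp [Dy, Yv]
  | succ b' => simp [Dy, Yv, pderiv_pow, pderiv_X_self, Algebra.smul_def]

lemma dx_Ypow (b : ℕ) : Dx (Yv ^ b) = 0 := by
  have : pderiv (0 : Fin 2) (X 1 : R2) = 0 := pderiv_X_of_ne (by decide)
  simp [Dx, Yv, pderiv_pow, this]

lemma dy_Xpow (a : ℕ) : Dy (Xv ^ a) = 0 := by
  have : pderiv (1 : Fin 2) (X 0 : R2) = 0 := pderiv_X_of_ne (by decide)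
  simp [Dy, Xv, pderiv_pow, this]

lemma dxpow_Xpow (i a : ℕ) :
    (Dx ^ i) (Xv ^ a) = ((a.descFactorial i : ℕ) : ℂ) • Xv ^ (a - i) := by
  induction i generalizing a with
  | zero => simp
  | succ i ih =>
    rw [end_pow_succ, dx_Xpow, map_smul, ih, smul_smul]
    have h1 : a - 1 - i = a - (i+1) := by omega
    have h2 : (a : ℂ) * ((a-1).descFactorial i : ℕ) = ((a.descFactorial (i+1) : ℕ) : ℂ) := by
      cases a with
      | zero => simp
      | succ a' => rw [Nat.succ_descFactorial_succ]; push_cast; ring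
    rw [h1, h2]

lemma dypow_Ypow (j b : ℕ) :
    (Dy ^ j) (Yv ^ b) = ((b.descFactorial j : ℕ) : ℂ) • Yv ^ (b - j) := by
  induction j generalizing b with
  | zero => simp
  | succ j ih =>
    rw [end_pow_succ, dy_Ypow, map_smul, ih, smul_smul]
    have h1 : b - 1 - j = b - (j+1) := by omega
    have h2 : (b : ℂ) * ((b-1).descFactorial j : ℕ) = ((b.descFactorial (j+1) : ℕ) : ℂ) := by
      cases b with
      | zero => simp
      | succ b' => rw [Nat.succ_descFactorial_succ]; push_cast; ring
    rw [h1, h2]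

lemma dxpow_mul_right (i : ℕ) (p q : R2) (hq : Dx q = 0) :
    (Dx ^ i) (p * q) = (Dx ^ i) p * q := by
  induction i generalizing p with
  | zero => simp
  | succ i ih =>
    rw [end_pow_succ, end_pow_succ]
    have : Dx (p * q) = Dx p * q := by
      show pderiv 0 (p * q) = _
      rw [pderiv_mul]
      have hq' : pderiv (0:Fin 2) q = 0 := hq
      simp [hq', Dx]
    rw [this, ih]

lemma dypow_mul_left (j : ℕ) (p q : R2) (hp : Dy p = 0) :
    (Dy ^ j) (p * q) = p * (Dy ^ j) q := by
  induction j generalizing q with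
  | zero => simp
  | succ j ih =>
    rw [end_pow_succ, end_pow_succ]
    have : Dy (p * q) = p * Dy q := by
      show pderiv 1 (p * q) = _
      rw [pderiv_mul]
      have hp' : pderiv (1:Fin 2) p = 0 := hp
      simp [hp', Dy]
    rw [this, ih]

/-- Master computation. -/
lemma dxdy_monomial (i j a b : ℕ) :
    (Dx ^ i) ((Dy ^ j) (Xv ^ a * Yv ^ b))
      = ((a.descFactorial i * b.descFactorial j : ℕ) : ℂ) • (Xv ^ (a-i) * Yv ^ (b-j)) := by
  rw [dypow_mul_left j _ _ (dy_Xpow a), dypow_Ypow, mul_smul_comm, map_smul,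
      dxpow_mul_right i _ _ (dx_Ypow (b-j)), dxpow_Xpow, smul_mul_assoc, smul_smul]
  push_cast
  ring_nf

lemma mem_tIdx {n : ℕ} {ij : ℕ × ℕ} : ij ∈ tIdx n ↔ ij.1 + ij.2 ≤ n := by
  simp only [tIdx, Finset.mem_filter, Finset.mem_product, Finset.mem_range]
  omega

lemma dxdy_monomial_zero {i j a b : ℕ} (h : ¬(i ≤ a ∧ j ≤ b)) :
    (Dx ^ i) ((Dy ^ j) (Xv ^ a * Yv ^ b)) = 0 := by
  rw [dxdy_monomial]
  have : a.descFactorial i * b.descFactorial j = 0 := by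
    rcases not_and_or.mp h with h' | h'
    · rw [Nat.descFactorial_eq_zero_iff_lt.mpr (show a < i by omega)]; simp
    · rw [Nat.descFactorial_eq_zero_iff_lt.mpr (show b < j by omega)]; simp
  rw [this]; simp

/-- Splitting the sum at a monomial of degree `a+b ≤ n`. -/
lemma sum_split (n : ℕ) (f : ℕ × ℕ → R2) (a b : ℕ) (hab : a + b ≤ n) :
    ∑ ij ∈ tIdx n, f ij * ((Dx ^ ij.1) ((Dy ^ ij.2) (Xv ^ a * Yv ^ b)))
      = ((a.factorial * b.factorial : ℕ) : ℂ) • f (a, b)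
        + ∑ ij ∈ (tIdx n).filter (fun ij => ij.1 + ij.2 < a + b),
            f ij * ((Dx ^ ij.1) ((Dy ^ ij.2) (Xv ^ a * Yv ^ b))) := by
  classical
  rw [← Finset.sum_filter_add_sum_filter_not (tIdx n) (fun ij => ij.1 + ij.2 < a + b), add_comm]
  congr 1
  rw [Finset.sum_eq_single_of_mem (a, b)]
  · rw [dxdy_monomial]
    simp only [Nat.sub_self, pow_zero, one_mul, Nat.descFactorial_self, mul_one]
    rw [mul_smul_comm, mul_one]
  · simp only [Finset.mem_filter, mem_tIdx]
    exact ⟨hab, by omega⟩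
  · intro ij hij hne
    simp only [Finset.mem_filter, mem_tIdx, not_lt] at hij
    have : ¬(ij.1 ≤ a ∧ ij.2 ≤ b) := by
      rintro ⟨h1, h2⟩
      exact hne (Prod.ext (by omega) (by omega))
    rw [dxdy_monomial_zero this, mul_zero]

/-- The recursively-defined solution. -/
def solF (n : ℕ) (g : ℕ × ℕ → R2) : ℕ × ℕ → R2 := fun ab =>
  (((ab.1.factorial * ab.2.factorial : ℕ) : ℂ))⁻¹ •
    (g ab - ∑ ij ∈ ((tIdx n).filter (fun ij => ij.1 + ij.2 < ab.1 + ab.2)).attach,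
      solF n g ij.1 * ((Dx ^ ij.1.1) ((Dy ^ ij.1.2) (Xv ^ ab.1 * Yv ^ ab.2))))
termination_by ab => ab.1 + ab.2
decreasing_by exact (Finset.mem_filter.mp ij.2).2

lemma solF_eq (n : ℕ) (g : ℕ × ℕ → R2) (ab : ℕ × ℕ) :
    solF n g ab = (((ab.1.factorial * ab.2.factorial : ℕ) : ℂ))⁻¹ •
      (g ab - ∑ ij ∈ (tIdx n).filter (fun ij => ij.1 + ij.2 < ab.1 + ab.2),
        solF n g ij * ((Dx ^ ij.1) ((Dy ^ ij.2) (Xv ^ ab.1 * Yv ^ ab.2)))) := by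
  rw [solF]
  congr 1
  rw [← Finset.sum_attach ((tIdx n).filter (fun ij => ij.1 + ij.2 < ab.1 + ab.2))
    (fun ij => solF n g ij * ((Dx ^ ij.1) ((Dy ^ ij.2) (Xv ^ ab.1 * Yv ^ ab.2))))]

lemma fact_ne (a b : ℕ) : (((a.factorial * b.factorial : ℕ) : ℂ)) ≠ 0 := by
  exact Nat.cast_ne_zero.mpr (Nat.mul_ne_zero a.factorial_ne_zero b.factorial_ne_zero)

lemma solF_spec (n : ℕ) (g : ℕ × ℕ → R2) (a b : ℕ) (hab : a + b ≤ n) :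
    ∑ ij ∈ tIdx n, solF n g ij * ((Dx ^ ij.1) ((Dy ^ ij.2) (Xv ^ a * Yv ^ b)))
      = g (a, b) := by
  rw [sum_split n _ a b hab, solF_eq]
  simp only []
  rw [smul_smul, mul_inv_cancel₀ (fact_ne a b), one_smul]
  abel

lemma monomial_mem_Tmod {n a b : ℕ} (h : a + b ≤ n) : Xv ^ a * Yv ^ b ∈ Tmod n :=
  Submodule.subset_span ⟨a, b, h, rfl⟩

/-- Uniqueness core. -/
lemma unique_core (n : ℕ) (f1 f2 : ℕ × ℕ → R2)
    (h1 : ∀ ij : ℕ × ℕ, n < ij.1 + ij.2 → f1 ij = 0)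
    (h2 : ∀ ij : ℕ × ℕ, n < ij.1 + ij.2 → f2 ij = 0)
    (heq : ∀ a b : ℕ, a + b ≤ n →
      ∑ ij ∈ tIdx n, f1 ij * ((Dx ^ ij.1) ((Dy ^ ij.2) (Xv ^ a * Yv ^ b)))
        = ∑ ij ∈ tIdx n, f2 ij * ((Dx ^ ij.1) ((Dy ^ ij.2) (Xv ^ a * Yv ^ b)))) :
    f1 = f2 := by
  have key : ∀ d : ℕ, ∀ ab : ℕ × ℕ, ab.1 + ab.2 = d → f1 ab = f2 ab := by
    intro d
    induction d using Nat.strong_induction_on with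
    | _ d ih =>
      rintro ⟨a, b⟩ hd
      simp only at hd
      by_cases hn : n < a + b
      · rw [h1 _ hn, h2 _ hn]
      · push_neg at hn
        have := heq a b hn
        rw [sum_split n f1 a b hn, sum_split n f2 a b hn] at this
        have hlow : ∑ ij ∈ (tIdx n).filter (fun ij => ij.1 + ij.2 < a + b),
            f1 ij * ((Dx ^ ij.1) ((Dy ^ ij.2) (Xv ^ a * Yv ^ b)))
          = ∑ ij ∈ (tIdx n).filter (fun ij => ij.1 + ij.2 < a + b),
            f2 ij * ((Dx ^ ij.1) ((Dy ^ ij.2) (Xv ^ a * Yv ^ b))) := by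
          refine Finset.sum_congr rfl ?_
          intro ij hij
          have hlt := (Finset.mem_filter.mp hij).2
          rw [ih (ij.1 + ij.2) (by omega) ij rfl]
        rw [hlow] at this
        have := add_right_cancel this
        exact smul_right_injective R2 (fact_ne a b) this
  funext ab
  exact key (ab.1 + ab.2) ab rfl

theorem stmt4 (n : ℕ) (φ : Module.End ℂ ↥(Tmod n)) :
    ∃! f : ℕ × ℕ → R2,
      (∀ ij : ℕ × ℕ, n < ij.1 + ij.2 → f ij = 0) ∧
      ∀ (P : R2) (hP : P ∈ Tmod n),
        ∑ ij ∈ tIdx n, f ij * ((Dx ^ ij.1) ((Dy ^ ij.2) P)) = (φ ⟨P, hP⟩ : R2) := by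
  classical
  set ψ : ↥(Tmod n) →ₗ[ℂ] R2 := (Tmod n).subtype ∘ₗ (φ : ↥(Tmod n) →ₗ[ℂ] ↥(Tmod n)) with hψ
  set g : ℕ × ℕ → R2 := fun ij =>
    if h : ij.1 + ij.2 ≤ n then ψ ⟨Xv ^ ij.1 * Yv ^ ij.2, monomial_mem_Tmod h⟩ else 0 with hg
  set f : ℕ × ℕ → R2 := fun ij => if ij.1 + ij.2 ≤ n then solF n g ij else 0 with hf
  have hsupp : ∀ ij : ℕ × ℕ, n < ij.1 + ij.2 → f ij = 0 := by
    intro ij hij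
    simp only [hf, if_neg (by omega : ¬ ij.1 + ij.2 ≤ n)]
  have hsum : ∀ (h : ℕ × ℕ → R2) (P : R2),
      (∀ ij ∈ tIdx n, f ij = h ij) → True := fun _ _ _ => trivial
  have hfs : ∀ P : R2, ∑ ij ∈ tIdx n, f ij * ((Dx ^ ij.1) ((Dy ^ ij.2) P))
      = ∑ ij ∈ tIdx n, solF n g ij * ((Dx ^ ij.1) ((Dy ^ ij.2) P)) := by
    intro P
    refine Finset.sum_congr rfl fun ij hij => ?_
    rw [hf]
    simp only [if_pos (mem_tIdx.mp hij)]
  refine ⟨f, ⟨hsupp, ?_⟩, ?_⟩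
  · -- the equation
    intro P hP
    rw [hfs]
    induction hP using Submodule.span_induction with
    | mem P hPm =>
      obtain ⟨a, b, hab, rfl⟩ := hPm
      rw [solF_spec n g a b hab, hg]
      simp only [dif_pos hab]
      rfl
    | zero =>
      simp only [map_zero, mul_zero, Finset.sum_const_zero]
      have : (⟨(0:R2), (Tmod n).zero_mem⟩ : ↥(Tmod n)) = 0 := rfl
      rw [this, map_zero, Submodule.coe_zero]
    | add x y hx hy ihx ihy =>
      have : (⟨x + y, (Tmod n).add_mem hx hy⟩ : ↥(Tmod n))
          = ⟨x, hx⟩ + ⟨y, hy⟩ := rfl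
      rw [this, map_add, Submodule.coe_add, ← ihx, ← ihy, ← Finset.sum_add_distrib]
      refine Finset.sum_congr rfl fun ij _ => ?_
      rw [map_add, map_add, mul_add]
    | smul c x hx ihx =>
      have : (⟨c • x, (Tmod n).smul_mem c hx⟩ : ↥(Tmod n)) = c • ⟨x, hx⟩ := rfl
      rw [this, map_smul, Submodule.coe_smul, ← ihx, Finset.smul_sum]
      refine Finset.sum_congr rfl fun ij _ => ?_
      rw [map_smul, map_smul, mul_smul_comm]
  · -- uniqueness
    rintro f' ⟨h'supp, h'eq⟩
    refine unique_core n f' f h'supp hsupp ?_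
    intro a b hab
    rw [h'eq _ (monomial_mem_Tmod hab)]
    have := hfs (Xv ^ a * Yv ^ b)
    rw [this, solF_spec n g a b hab, hg]
    simp only [dif_pos hab]
    rfl
end
end

section
/- Let p ∈ ℕ with p ≥ 2 and let q = ⌊p/2⌋. Then the operator T = M_y ∘ D_x ∘ D_x preserves 𝒮²_{p,q}; however, for every element P of the unital ℂ-subalgebra of End(R) generated by {W¹, W², W³, W⁴, W⁵, W⁶, W⁷} there exists v ∈ 𝒮²_{p,q} with P(v) ≠ T(v). In particular T cannot be written as a polynomial in the generators plus an operator vanishing on 𝒮²_{p,q}. -/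
noncomputable section

open MvPolynomial

/-- `W¹ = D_x`. -/
def W1 : Module.End ℂ R2 := Dx

/-- `W² = M_{x²}∘D_x + r·M_{xy}∘D_y − p·M_x`. -/
def W2 (r p : ℕ) : Module.End ℂ R2 :=
  Mf (Xv ^ 2) * Dx + (r : ℂ) • (Mf (Xv * Yv) * Dy) - (p : ℂ) • Mf Xv

/-- `W³ = M_x∘D_x − (p/2)·id`. -/
def W3 (p : ℕ) : Module.End ℂ R2 := Mf Xv * Dx - ((p : ℂ) / 2) • 1

/-- `W⁴ = M_y∘D_y`. -/
def W4 : Module.End ℂ R2 := Mf Yv * Dy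

/-- `W^{5+i} = M_{xⁱ}∘D_y`. -/
def W5i (i : ℕ) : Module.End ℂ R2 := Mf (Xv ^ i) * Dy

/-- The generating set `{W¹, …, W^{5+r}}` of the realization `𝔤^{24,r}_p`. -/
def Wset (r p : ℕ) : Set (Module.End ℂ R2) :=
  {W1, W2 r p, W3 p, W4} ∪ {T | ∃ i ≤ r, T = W5i i}

/- ### Auxiliary lemmas -/

lemma dx_apply (a b : ℕ) : Dx (Xv^a*Yv^b) = a • (Xv^(a-1) * Yv^b) := by
  show pderiv 0 _ = _
  rw [Xv, Yv, Derivation.leibniz, Derivation.leibniz_pow, Derivation.leibniz_pow,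
    pderiv_X_self, pderiv_X_of_ne (by decide)]
  simp [smul_eq_mul]
  ring

lemma dy_apply (a b : ℕ) : Dy (Xv^a*Yv^b) = b • (Xv^a * Yv^(b-1)) := by
  show pderiv 1 _ = _
  rw [Xv, Yv, Derivation.leibniz, Derivation.leibniz_pow, Derivation.leibniz_pow,
    pderiv_X_self, pderiv_X_of_ne (by decide)]
  simp [smul_eq_mul]
  ring

/-- Span of monomials of `y`-degree at most `b`. -/
def NbS (b : ℕ) : Submodule ℂ R2 :=
  Submodule.span ℂ {P : R2 | ∃ c e : ℕ, e ≤ b ∧ P = Xv ^ c * Yv ^ e}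

lemma nsmul_mem' {N : Submodule ℂ R2} (n : ℕ) {v : R2} (h : v ∈ N) : n • v ∈ N :=
  N.toAddSubmonoid.nsmul_mem h n

lemma mem_NbS' {b : ℕ} (c e : ℕ) (h : e ≤ b) {v : R2} (hv : v = Xv ^ c * Yv ^ e) :
    v ∈ NbS b := hv ▸ Submodule.subset_span ⟨c, e, h, rfl⟩

lemma NbS_mono {b b' : ℕ} (h : b ≤ b') : NbS b ≤ NbS b' :=
  Submodule.span_mono (by rintro P ⟨c, e, he, rfl⟩; exact ⟨c, e, he.trans h, rfl⟩)

lemma NonposY.map' {T : Module.End ℂ R2} (hT : NonposY T) {b : ℕ} {v : R2}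
    (hv : v ∈ NbS b) : T v ∈ NbS b := by
  induction hv using Submodule.span_induction with
  | mem w hw =>
      obtain ⟨c, e, he, rfl⟩ := hw
      exact NbS_mono he (hT c e)
  | zero => simp only [map_zero]; exact (NbS b).zero_mem
  | add x y _ _ hx hy => rw [map_add]; exact (NbS b).add_mem hx hy
  | smul a x _ hx => rw [map_smul]; exact (NbS b).smul_mem a hx

lemma nonposY_mul {T S : Module.End ℂ R2} (hT : NonposY T) (hS : NonposY S) :
    NonposY (T * S) := fun a b => hT.map' (hS a b)

lemma nonposY_W1 : NonposY W1 := by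
  intro a b
  rw [W1, dx_apply]
  exact nsmul_mem' a (mem_NbS' (a-1) b le_rfl rfl)

lemma nonposY_W2 (r p : ℕ) : NonposY (W2 r p) := by
  intro a b
  have : (W2 r p) (Xv ^ a * Yv ^ b) =
      a • (Xv^2 * (Xv^(a-1) * Yv^b)) + (r:ℂ) • (b • (Xv*Yv * (Xv^a * Yv^(b-1))))
        - (p:ℂ) • (Xv * (Xv^a * Yv^b)) := by
    simp only [W2, LinearMap.sub_apply, LinearMap.add_apply, LinearMap.smul_apply,
      Module.End.mul_apply, Mf, LinearMap.mulLeft_apply, dx_apply, dy_apply,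
      smul_eq_mul, nsmul_eq_mul]
    ring
  rw [this]
  refine Submodule.sub_mem _ (Submodule.add_mem _ ?_ ?_) ?_
  · exact nsmul_mem' a (mem_NbS' (2+(a-1)) b le_rfl (by ring))
  · rcases b with _ | b'
    · simp
    · exact Submodule.smul_mem _ _ (nsmul_mem' _
        (mem_NbS' (1+a) (b'+1) le_rfl (by simp only [Nat.add_sub_cancel]; ring)))
  · exact Submodule.smul_mem _ _ (mem_NbS' (1+a) b le_rfl (by ring))

lemma nonposY_W3 (p : ℕ) : NonposY (W3 p) := by
  intro a b
  have : (W3 p) (Xv ^ a * Yv ^ b) =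
      a • (Xv * (Xv^(a-1) * Yv^b)) - ((p:ℂ)/2) • (Xv^a * Yv^b) := by
    simp only [W3, LinearMap.sub_apply, LinearMap.smul_apply, Module.End.mul_apply,
      Mf, LinearMap.mulLeft_apply, dx_apply, Module.End.one_apply,
      smul_eq_mul, nsmul_eq_mul]
    ring
  rw [this]
  refine Submodule.sub_mem _ ?_ (Submodule.smul_mem _ _ (mem_NbS' a b le_rfl rfl))
  exact nsmul_mem' a (mem_NbS' (1+(a-1)) b le_rfl (by ring))

lemma nonposY_W4 : NonposY W4 := by
  intro a b
  have : W4 (Xv ^ a * Yv ^ b) = b • (Yv * (Xv^a * Yv^(b-1))) := by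
    simp only [W4, Module.End.mul_apply, Mf, LinearMap.mulLeft_apply, dy_apply,
      smul_eq_mul, nsmul_eq_mul]
    ring
  rw [this]
  rcases b with _ | b'
  · simp
  · exact nsmul_mem' _ (mem_NbS' a (b'+1) le_rfl (by simp only [Nat.add_sub_cancel]; ring))

lemma nonposY_W5i (i : ℕ) : NonposY (W5i i) := by
  intro a b
  have : (W5i i) (Xv ^ a * Yv ^ b) = b • (Xv^(i+a) * Yv^(b-1)) := by
    simp only [W5i, Module.End.mul_apply, Mf, LinearMap.mulLeft_apply, dy_apply,
      smul_eq_mul, nsmul_eq_mul]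
    ring
  rw [this]
  exact nsmul_mem' b (mem_NbS' (i+a) (b-1) (Nat.sub_le b 1) rfl)

lemma y_notMem_NbS0 : (Yv : R2) ∉ NbS 0 := by
  intro h
  have hker : NbS 0 ≤ LinearMap.ker (lcoeff ℂ (Finsupp.single (1 : Fin 2) 1)) := by
    rw [NbS, Submodule.span_le]
    rintro P ⟨c, e, he, rfl⟩
    interval_cases e
    simp only [SetLike.mem_coe, LinearMap.mem_ker, lcoeff_apply, pow_zero, mul_one, Xv,
      X_pow_eq_monomial, coeff_monomial]
    rw [if_neg]
    intro hEq
    have := DFunLike.congr_fun hEq (1 : Fin 2)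
    simp [Finsupp.single_apply] at this
  have := hker h
  simp only [LinearMap.mem_ker, lcoeff_apply, Yv] at this
  rw [show (X (1 : Fin 2) : R2) = X 1 ^ 1 by ring, X_pow_eq_monomial,
    coeff_monomial, if_pos rfl] at this
  exact one_ne_zero this

lemma hT_apply (i j : ℕ) : (Mf Yv * Dx * Dx) (Xv ^ i * Yv ^ j) =
    i • ((i-1) • (Xv^(i-1-1) * Yv^(j+1))) := by
  simp only [Module.End.mul_apply, dx_apply, map_nsmul, Mf, LinearMap.mulLeft_apply]
  congr 2
  rw [pow_succ]
  ring

theorem stmt9 (p : ℕ) (hp : 2 ≤ p) :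
    (∀ v ∈ Smod 2 p (p / 2), (Mf Yv * Dx * Dx) v ∈ Smod 2 p (p / 2)) ∧
    ∀ P ∈ Algebra.adjoin ℂ
        ({W1, W2 2 p, W3 p, W4, W5i 0, W5i 1, W5i 2} : Set (Module.End ℂ R2)),
      ∃ v ∈ Smod 2 p (p / 2), P v ≠ (Mf Yv * Dx * Dx) v := by
  constructor
  · intro v hv
    induction hv using Submodule.span_induction with
    | mem w hw =>
        obtain ⟨i, j, hij, hj, rfl⟩ := hw
        rw [hT_apply]
        match i with
        | 0 => simp
        | 1 => simp
        | (k+2) =>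
            refine nsmul_mem' _ (nsmul_mem' _ (Submodule.subset_span ⟨k, j+1, ?_, ?_, rfl⟩))
            · omega
            · omega
    | zero => simp only [map_zero]; exact Submodule.zero_mem _
    | add x y _ _ hx hy => rw [map_add]; exact Submodule.add_mem _ hx hy
    | smul a x _ hx => rw [map_smul]; exact Submodule.smul_mem _ a hx
  · intro P hP
    have hNP : NonposY P := by
      induction hP using Algebra.adjoin_induction with
      | mem x hx =>
          rcases hx with h | h | h | h | h | h | h <;> subst h
          · exact nonposY_W1
          · exact nonposY_W2 2 p
          · exact nonposY_W3 p
          · exact nonposY_W4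
          · exact nonposY_W5i 0
          · exact nonposY_W5i 1
          · exact nonposY_W5i 2
      | algebraMap r =>
          intro a b
          rw [Module.algebraMap_end_apply]
          exact Submodule.smul_mem _ r (Submodule.subset_span ⟨a, b, le_rfl, rfl⟩)
      | add x y _ _ hx hy =>
          intro a b
          rw [LinearMap.add_apply]
          exact Submodule.add_mem _ (hx a b) (hy a b)
      | mul x y _ _ hx hy => exact nonposY_mul hx hy
    refine ⟨Xv ^ 2, Submodule.subset_span ⟨2, 0, by omega, Nat.zero_le _, by ring⟩, ?_⟩
    intro hEq
    have h2 : (Mf Yv * Dx * Dx) (Xv ^ 2) = (2 : ℕ) • (Yv : R2) := by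
      have h := hT_apply 2 0
      rw [show Xv^2 * Yv^0 = Xv^2 by ring] at h
      rw [h]
      norm_num
    have hmem : P (Xv ^ 2) ∈ NbS 0 := by
      have h := hNP 2 0
      rw [show Xv^2 * Yv^0 = Xv^2 by ring] at h
      exact h
    rw [hEq, h2] at hmem
    have hy : (Yv : R2) ∈ NbS 0 := by
      have h2' : ((2:ℂ)⁻¹) • ((2:ℕ) • (Yv : R2)) = Yv := by
        rw [← Nat.cast_smul_eq_nsmul ℂ, smul_smul]; norm_num
      exact h2' ▸ Submodule.smul_mem _ _ hmem
    exact y_notMem_NbS0 hy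
end
end
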